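/- arXiv:1401.1051 — 2 statements merged into one kernel-verified Lean document; each statement's English description precedes it below -/
import Mathlib

section
/- Let x, y : [a, b] → ℝ be H¹ (absolutely continuous with square-integrable derivative), with x(a) = y(a) = x(b) = y(b) = δ > 0, x(t) ≤ δ and y(t) = δ for all t ∈ [a, b], and x(t_0) = 0 for some t_0 ∈ (a, b). Suppose A > 0 and B : [a, b] → ℝ is measurable with A ẋ(t)² + B(t) ẋ(t) ≥ 0 almost everywhere and strict inequality on a set of positive measure. Further suppose g : [a, b] × ℝ → ℝ is such that g(t, s) is nonincreasing in s for s > 0. Then ∫_a^b [A ẋ² + B ẋ + g(t, x(t))] dt > ∫_a^b g(t, δ) dt = ∫_a^b [A ẏ² + B ẏ + g(t, y(t))] dt. -/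
open MeasureTheory

/-! The action splits as the kinetic integral plus the potential integral. The kinetic
integrand is a.e. nonnegative and positive on a set of positive measure, so its integral is
positive; since `0 ≤ x ≤ δ` and `g t` is nonincreasing, `g t δ ≤ g t (x t)` pointwise, so
the potential integral dominates that of the frozen path `y ≡ δ`. -/

theorem intervalIntegral_pos_of_ae_nonneg_of_measure_pos {μ : Measure ℝ} [NullSingletonClass μ]
    {f : ℝ → ℝ} {a b : ℝ} (hab : a < b) (hf : 0 ≤ᵐ[μ.restrict (Set.Icc a b)] f)
    (hfi : IntervalIntegrable f μ a b) (hpos : 0 < μ {t ∈ Set.Icc a b | 0 < f t}) :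
    0 < ∫ t in a..b, f t ∂μ := by
  have hf' : 0 ≤ᵐ[μ.restrict (Set.uIoc a b)] f := by
    rw [Set.uIoc_of_le hab.le]
    exact ae_restrict_of_ae_restrict_of_subset Set.Ioc_subset_Icc_self hf
  refine (intervalIntegral.integral_pos_iff_support_of_nonneg_ae' hf' hfi).2 ⟨hab, ?_⟩
  have hsub : {t ∈ Set.Icc a b | 0 < f t} ⊆ (Function.support f ∩ Set.Ioc a b) ∪ {a} := by
    rintro t ⟨⟨hat, htb⟩, hft⟩
    rcases hat.eq_or_lt with rfl | hat
    · exact Or.inr rfl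
    · exact Or.inl ⟨hft.ne', hat, htb⟩
  calc 0 < μ {t ∈ Set.Icc a b | 0 < f t} := hpos
    _ ≤ μ (Function.support f ∩ Set.Ioc a b) + μ {a} :=
      (measure_mono hsub).trans (measure_union_le _ _)
    _ = μ (Function.support f ∩ Set.Ioc a b) := by rw [measure_singleton, add_zero]

theorem excision_comparison_estimate_general
    (a b δ A : ℝ) (hab : a < b)
    (x x' B y : ℝ → ℝ)
    (hx_nonneg : ∀ t ∈ Set.Icc a b, 0 ≤ x t)
    (hx_le : ∀ t ∈ Set.Icc a b, x t ≤ δ)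
    (hy : ∀ t ∈ Set.Icc a b, y t = δ)
    (hae : ∀ᵐ t ∂(volume.restrict (Set.Icc a b)), 0 ≤ A * (x' t) ^ 2 + B t * x' t)
    (hpos : 0 < volume {t ∈ Set.Icc a b | 0 < A * (x' t) ^ 2 + B t * x' t})
    (g : ℝ → ℝ → ℝ)
    (hg : ∀ t s₁ s₂, 0 ≤ s₁ → s₁ ≤ s₂ → g t s₂ ≤ g t s₁)
    (hint1 : IntervalIntegrable (fun t => A * (x' t) ^ 2 + B t * x' t) volume a b)
    (hint2 : IntervalIntegrable (fun t => g t (x t)) volume a b)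
    (hint3 : IntervalIntegrable (fun t => g t δ) volume a b) :
    ((∫ t in a..b, (A * (x' t) ^ 2 + B t * x' t + g t (x t))) > ∫ t in a..b, g t δ)
    ∧ (∫ t in a..b, g t δ)
      = ∫ t in a..b, (A * (0 : ℝ) ^ 2 + B t * 0 + g t (y t)) := by
  refine ⟨?_, ?_⟩
  · have hkinetic : 0 < ∫ t in a..b, A * (x' t) ^ 2 + B t * x' t :=
      intervalIntegral_pos_of_ae_nonneg_of_measure_pos hab hae hint1 hpos
    have hpotential : ∫ t in a..b, g t δ ≤ ∫ t in a..b, g t (x t) :=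
      intervalIntegral.integral_mono_on hab.le hint3 hint2 fun t ht =>
        hg t (x t) δ (hx_nonneg t ht) (hx_le t ht)
    rw [intervalIntegral.integral_add hint1 hint2]
    linarith
  · refine intervalIntegral.integral_congr fun t ht => ?_
    rw [Set.uIcc_of_le hab.le] at ht
    simp [hy t ht]

/-- Abstract comparison estimate (Lemma 3.1 of Yu–Zhang): freezing the gap at
level `δ` strictly decreases the action when the kinetic cross terms are
nonnegative (and positive on a set of positive measure) and the potential
`g(t, s)` is nonincreasing in `s`. -/
theorem excision_comparison_estimate
    (a b δ t0 A : ℝ) (hab : a < b) (hδ : 0 < δ) (hA : 0 < A)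
    (x x' B y : ℝ → ℝ)
    (hx_rep : ∀ t ∈ Set.Icc a b, x t = x a + ∫ s in a..t, x' s)
    (hx'int : IntervalIntegrable x' volume a b)
    (hx'sq : IntervalIntegrable (fun t => (x' t) ^ 2) volume a b)
    (hxa : x a = δ) (hxb : x b = δ)
    (hx_nonneg : ∀ t ∈ Set.Icc a b, 0 ≤ x t)
    (hx_le : ∀ t ∈ Set.Icc a b, x t ≤ δ)
    (ht0 : t0 ∈ Set.Ioo a b) (hx0 : x t0 = 0)
    (hy : ∀ t ∈ Set.Icc a b, y t = δ)
    (hBmeas : Measurable B)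
    (hae : ∀ᵐ t ∂(volume.restrict (Set.Icc a b)), 0 ≤ A * (x' t) ^ 2 + B t * x' t)
    (hpos : 0 < volume {t ∈ Set.Icc a b | 0 < A * (x' t) ^ 2 + B t * x' t})
    (g : ℝ → ℝ → ℝ)
    (hg : ∀ t s₁ s₂, 0 ≤ s₁ → s₁ ≤ s₂ → g t s₂ ≤ g t s₁)
    (hint1 : IntervalIntegrable (fun t => A * (x' t) ^ 2 + B t * x' t) volume a b)
    (hint2 : IntervalIntegrable (fun t => g t (x t)) volume a b)
    (hint3 : IntervalIntegrable (fun t => g t δ) volume a b) :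
    ((∫ t in a..b, (A * (x' t) ^ 2 + B t * x' t + g t (x t))) > ∫ t in a..b, g t δ)
    ∧ (∫ t in a..b, g t δ)
      = ∫ t in a..b, (A * (0 : ℝ) ^ 2 + B t * 0 + g t (y t)) :=
  excision_comparison_estimate_general a b δ A hab x x' B y hx_nonneg hx_le hy hae hpos g hg hint1
    hint2 hint3
end

section
/- Consider two bodies on the line with equal masses m, positions q_1(t) ≤ q_2(t), center of mass at the origin, and gap x(t) = q_2(t) − q_1(t) ≥ 0. For the two-body action A(x) = ∫_a^b [(m/4) ẋ² + m²/x] dt on H¹ paths with fixed positive endpoints x(a) = x_a > 0, x(b) = x_b > 0: any path x with x(t_0) = 0 for some t_0 ∈ (a, b) and x ≤ δ on some subinterval [t_0 − ε, t_0 + ε] with x(t_0 − ε) = x(t_0 + ε) = δ has strictly larger action than the modified path equal to δ on [t_0 − ε, t_0 + ε] and equal to x elsewhere. -/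
/-!
On the excised interval the modified path has no kinetic energy and potential `m²/δ ≤ m²/x`,
while `x` has positive kinetic energy there because it falls from `δ` to `0`. Off that interval
the two integrands agree, and the action of `x` is finite there because, by compactness, `x` is
bounded below by a positive constant; so the strict inequality survives in `ℝ≥0∞`.
-/

open MeasureTheory Set
open scoped ENNReal

/-- As `ENNReal.ofReal y = 0` for `y ≤ 0`, the potential is `+∞` at a collision if `m ≠ 0`. -/
noncomputable def twoBodyLagrangian (m v y : ℝ) : ℝ≥0∞ :=
  ENNReal.ofReal (m / 4 * v ^ 2) + ENNReal.ofReal (m ^ 2) / ENNReal.ofReal y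

theorem twoBodyLagrangian_eq_add (m v y : ℝ) :
    twoBodyLagrangian m v y = ENNReal.ofReal (m / 4 * v ^ 2) + twoBodyLagrangian m 0 y := by
  simp [twoBodyLagrangian]

theorem twoBodyLagrangian_le_of_le {m v y δ : ℝ} (h : y ≤ δ) :
    twoBodyLagrangian m v δ ≤ twoBodyLagrangian m v y :=
  add_le_add_right (ENNReal.div_le_div_left (ENNReal.ofReal_le_ofReal h) _) _

theorem twoBodyLagrangian_ne_top (m v : ℝ) {y : ℝ} (hy : 0 < y) :
    twoBodyLagrangian m v y ≠ ∞ :=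
  ENNReal.add_ne_top.2 ⟨ENNReal.ofReal_ne_top,
    ENNReal.div_ne_top ENNReal.ofReal_ne_top (ENNReal.ofReal_pos.2 hy).ne'⟩

theorem setLIntegral_lt_of_lt_of_eqOn_diff {α : Type*} [MeasurableSpace α] {μ : Measure α}
    {f g : α → ℝ≥0∞} {s t : Set α} (hs : MeasurableSet s) (ht : MeasurableSet t)
    (hts : t ⊆ s) (hlt : ∫⁻ a in t, f a ∂μ < ∫⁻ a in t, g a ∂μ)
    (heq : EqOn f g (s \ t)) (hfin : ∫⁻ a in s \ t, g a ∂μ ≠ ∞) :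
    ∫⁻ a in s, f a ∂μ < ∫⁻ a in s, g a ∂μ := by
  rw [← lintegral_inter_add_sdiff f s ht, ← lintegral_inter_add_sdiff g s ht,
    inter_eq_right.2 hts, setLIntegral_congr_fun (hs.diff ht) heq]
  exact ENNReal.add_lt_add_right hfin hlt

section Primitive

variable {x x' : ℝ → ℝ} {a b : ℝ}

theorem continuousOn_of_eq_add_primitive
    (hrep : ∀ t ∈ Icc a b, x t = x a + ∫ s in a..t, x' s)
    (hint : IntervalIntegrable x' volume a b) (hab : a ≤ b) :
    ContinuousOn x (Icc a b) := by
  have hprim := intervalIntegral.continuousOn_primitive_interval' hint left_mem_uIcc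
  rw [uIcc_of_le hab] at hprim
  exact (continuousOn_const.add hprim).congr hrep

theorem intervalIntegral_eq_sub_of_eq_add_primitive
    (hrep : ∀ t ∈ Icc a b, x t = x a + ∫ s in a..t, x' s)
    (hint : IntervalIntegrable x' volume a b) {s u : ℝ} (hs : s ∈ Icc a b)
    (hu : u ∈ Icc a b) :
    ∫ r in s..u, x' r = x u - x s := by
  have hint' {v : ℝ} (hv : v ∈ Icc a b) : IntervalIntegrable x' volume a v :=
    hint.mono_set (by
      rw [uIcc_of_le hv.1, uIcc_of_le (hv.1.trans hv.2)]
      exact Icc_subset_Icc_right hv.2)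
  rw [← intervalIntegral.integral_interval_sub_left (hint' hu) (hint' hs), hrep u hu, hrep s hs]
  ring

theorem setLIntegral_ofReal_mul_sq_ne_zero
    (hrep : ∀ t ∈ Icc a b, x t = x a + ∫ s in a..t, x' s)
    (hint : IntervalIntegrable x' volume a b) {c s u r : ℝ} (hc : 0 < c)
    (hsu : Icc s u ⊆ Icc a b) (hr : r ∈ Icc s u) (hne : x r ≠ x s) :
    ∫⁻ t in Icc s u, ENNReal.ofReal (c * x' t ^ 2) ≠ 0 := by
  intro h0
  have hs : s ∈ Icc a b := hsu (left_mem_Icc.2 (hr.1.trans hr.2))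
  have hint_su : IntegrableOn x' (Icc s u) :=
    ((intervalIntegrable_iff_integrableOn_Icc_of_le (hs.1.trans hs.2)).1 hint).mono_set hsu
  have hkin_meas :
      AEMeasurable (fun t => ENNReal.ofReal (c * x' t ^ 2)) (volume.restrict (Icc s u)) :=
    ((hint_su.aemeasurable.pow_const 2).const_mul c).ennreal_ofReal
  have hzero : x' =ᵐ[volume.restrict (Icc s u)] 0 := by
    filter_upwards [(lintegral_eq_zero_iff' hkin_meas).1 h0] with t ht
    have hsq : x' t ^ 2 ≤ 0 := nonpos_of_mul_nonpos_right (ENNReal.ofReal_eq_zero.1 ht) hc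
    exact pow_eq_zero_iff two_ne_zero |>.1 (hsq.antisymm (sq_nonneg _))
  refine hne (sub_eq_zero.1 ?_)
  rw [← intervalIntegral_eq_sub_of_eq_add_primitive hrep hint hs (hsu hr),
    intervalIntegral.integral_of_le hr.1]
  refine integral_eq_zero_of_ae (ae_mono (Measure.restrict_mono ?_ le_rfl) hzero)
  exact Ioc_subset_Icc_self.trans (Icc_subset_Icc_right hr.2)

end Primitive

theorem ContinuousOn.exists_pos_forall_le_sdiff_Icc {x : ℝ → ℝ} {a b p q : ℝ}
    (hx : ContinuousOn x (Icc a b)) (hp : 0 < x p) (hq : 0 < x q)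
    (hpos : ∀ t ∈ Icc a b, t ∉ Icc p q → 0 < x t) :
    ∃ c > 0, ∀ t ∈ Icc a b \ Icc p q, c ≤ x t := by
  have hpos' : ∀ t ∈ Icc a b \ Ioo p q, 0 < x t := by
    rintro t ⟨htab, htIoo⟩
    by_cases htpq : t ∈ Icc p q
    · have hends : t ∈ Icc p q \ Ioo p q := ⟨htpq, htIoo⟩
      rw [Icc_sdiff_Ioo_same (htpq.1.trans htpq.2)] at hends
      obtain rfl | rfl := hends
      exacts [hp, hq]
    · exact hpos t htab htpq
  obtain ⟨c, hc, hcx⟩ :=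
    (isCompact_Icc.diff isOpen_Ioo).exists_forall_le' (hx.mono sdiff_subset) hpos'
  exact ⟨c, hc, fun t ht => hcx t ⟨ht.1, fun h => ht.2 (Ioo_subset_Icc_self h)⟩⟩

theorem setLIntegral_twoBodyLagrangian_const_lt {m δ : ℝ} {v y : ℝ → ℝ} {s : Set ℝ}
    (hs : MeasurableSet s) (hvol : volume s ≠ ∞) (hδ : 0 < δ)
    (hv : AEMeasurable v (volume.restrict s))
    (hkin : ∫⁻ t in s, ENNReal.ofReal (m / 4 * v t ^ 2) ≠ 0) (hy : ∀ t ∈ s, y t ≤ δ) :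
    ∫⁻ _ in s, twoBodyLagrangian m 0 δ < ∫⁻ t in s, twoBodyLagrangian m (v t) (y t) := by
  have hkin_meas : AEMeasurable (fun t => ENNReal.ofReal (m / 4 * v t ^ 2)) (volume.restrict s) :=
    ((hv.pow_const 2).const_mul _).ennreal_ofReal
  calc ∫⁻ _ in s, twoBodyLagrangian m 0 δ
      < (∫⁻ t in s, ENNReal.ofReal (m / 4 * v t ^ 2)) +
          ∫⁻ _ in s, twoBodyLagrangian m 0 δ := by
        rw [add_comm, setLIntegral_const]
        exact ENNReal.lt_add_right (ENNReal.mul_ne_top (twoBodyLagrangian_ne_top m 0 hδ) hvol) hkin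
    _ = ∫⁻ t in s, twoBodyLagrangian m (v t) δ := by
        simp_rw [twoBodyLagrangian_eq_add m (v _) δ]
        rw [lintegral_add_left' hkin_meas]
    _ ≤ ∫⁻ t in s, twoBodyLagrangian m (v t) (y t) :=
        setLIntegral_mono' hs fun t ht => twoBodyLagrangian_le_of_le (hy t ht)

theorem setLIntegral_twoBodyLagrangian_ne_top {m c : ℝ} {v y : ℝ → ℝ} {s : Set ℝ}
    (hs : MeasurableSet s) (hvol : volume s ≠ ∞) (hc : 0 < c)
    (hv : IntegrableOn (fun t => v t ^ 2) s) (hy : ∀ t ∈ s, c ≤ y t) :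
    ∫⁻ t in s, twoBodyLagrangian m (v t) (y t) ≠ ∞ := by
  refine ne_top_of_le_ne_top ?_
    (setLIntegral_mono' hs fun t ht => twoBodyLagrangian_le_of_le (hy t ht))
  simp_rw [twoBodyLagrangian_eq_add m (v _) c]
  rw [lintegral_add_right' _ aemeasurable_const, setLIntegral_const]
  exact ENNReal.add_ne_top.2 ⟨((hv.const_mul (m / 4)).lintegral_lt_top).ne,
    ENNReal.mul_ne_top (twoBodyLagrangian_ne_top m 0 hc) hvol⟩

theorem two_body_excision_strict_general
    (a b δ t0 ε m : ℝ) (hδ : 0 < δ) (hm : 0 < m) (hε : 0 < ε)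
    (hsub : Set.Icc (t0 - ε) (t0 + ε) ⊆ Set.Ioo a b)
    (x x' : ℝ → ℝ)
    (hrep : ∀ t ∈ Set.Icc a b, x t = x a + ∫ s in a..t, x' s)
    (hx'int : IntervalIntegrable x' volume a b)
    (hx'sq : IntervalIntegrable (fun t => (x' t) ^ 2) volume a b)
    (hx0 : t0 ∈ Set.Ioo a b ∧ x t0 = 0)
    (hle : ∀ t ∈ Set.Icc (t0 - ε) (t0 + ε), x t ≤ δ)
    (hbd1 : x (t0 - ε) = δ) (hbd2 : x (t0 + ε) = δ)
    (hpos_out : ∀ t ∈ Set.Icc a b, t ∉ Set.Icc (t0 - ε) (t0 + ε) → 0 < x t)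
    (z z' : ℝ → ℝ)
    (hz : ∀ t, z t = if t ∈ Set.Icc (t0 - ε) (t0 + ε) then δ else x t)
    (hz' : ∀ t, z' t = if t ∈ Set.Icc (t0 - ε) (t0 + ε) then 0 else x' t) :
    (∫⁻ t in Set.Icc a b,
        (ENNReal.ofReal ((m / 4) * (x' t) ^ 2)
          + ENNReal.ofReal (m ^ 2) / ENNReal.ofReal (x t)))
    > ∫⁻ t in Set.Icc a b,
        (ENNReal.ofReal ((m / 4) * (z' t) ^ 2)
          + ENNReal.ofReal (m ^ 2) / ENNReal.ofReal (z t)) := by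
  set I := Icc (t0 - ε) (t0 + ε)
  set J := Icc a b
  have hIJ : I ⊆ J := hsub.trans Ioo_subset_Icc_self
  have hleft : t0 - ε ∈ I := left_mem_Icc.2 (by linarith)
  have hab : a ≤ b := (hIJ hleft).1.trans (hIJ hleft).2
  have hx'J : IntegrableOn x' J := (intervalIntegrable_iff_integrableOn_Icc_of_le hab).1 hx'int
  have hx'sqJ : IntegrableOn (fun t => x' t ^ 2) J :=
    (intervalIntegrable_iff_integrableOn_Icc_of_le hab).1 hx'sq
  have hkin : ∫⁻ t in I, ENNReal.ofReal (m / 4 * x' t ^ 2) ≠ 0 :=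
    setLIntegral_ofReal_mul_sq_ne_zero hrep hx'int (r := t0) (by positivity) hIJ
      ⟨by linarith, by linarith⟩ (by rw [hbd1, hx0.2]; exact hδ.ne)
  obtain ⟨c, hc, hcx⟩ := (continuousOn_of_eq_add_primitive hrep hx'int hab)
    |>.exists_pos_forall_le_sdiff_Icc (hbd1 ▸ hδ) (hbd2 ▸ hδ) hpos_out
  show ∫⁻ t in J, twoBodyLagrangian m (z' t) (z t)
    < ∫⁻ t in J, twoBodyLagrangian m (x' t) (x t)
  refine setLIntegral_lt_of_lt_of_eqOn_diff measurableSet_Icc measurableSet_Icc hIJ ?_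
    (fun t ht => by simp [hz, hz', ht.2]) ?_
  · rw [setLIntegral_congr_fun (g := fun _ => twoBodyLagrangian m 0 δ) measurableSet_Icc
      fun t ht => by simp [hz, hz', ht]]
    exact setLIntegral_twoBodyLagrangian_const_lt measurableSet_Icc (by simp) hδ
      (hx'J.mono_set hIJ).aemeasurable hkin hle
  · exact setLIntegral_twoBodyLagrangian_ne_top (measurableSet_Icc.diff measurableSet_Icc)
      ((measure_mono sdiff_subset).trans_lt measure_Icc_lt_top).ne hc
      (hx'sqJ.mono_set sdiff_subset) hcx

/-- The `N = 2` instance of Lemma 3.1 of Yu–Zhang: for the two-body action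
`∫ (m/4) ẋ² + m²/x` (valued in `ℝ≥0∞`), a path whose gap `x` collides
(`x(t0) = 0`) and stays `≤ δ` on `[t0 − ε, t0 + ε]` with boundary values `δ`
has strictly larger action than the path frozen at `δ` on that interval. -/
theorem two_body_excision_strict
    (a b δ t0 ε m : ℝ) (hab : a < b) (hδ : 0 < δ) (hm : 0 < m) (hε : 0 < ε)
    (hsub : Set.Icc (t0 - ε) (t0 + ε) ⊆ Set.Ioo a b)
    (x x' : ℝ → ℝ)
    (hrep : ∀ t ∈ Set.Icc a b, x t = x a + ∫ s in a..t, x' s)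
    (hx'int : IntervalIntegrable x' volume a b)
    (hx'sq : IntervalIntegrable (fun t => (x' t) ^ 2) volume a b)
    (hxa : 0 < x a) (hxb : 0 < x b)
    (hnonneg : ∀ t ∈ Set.Icc a b, 0 ≤ x t)
    (hx0 : t0 ∈ Set.Ioo a b ∧ x t0 = 0)
    (hle : ∀ t ∈ Set.Icc (t0 - ε) (t0 + ε), x t ≤ δ)
    (hbd1 : x (t0 - ε) = δ) (hbd2 : x (t0 + ε) = δ)
    (hpos_out : ∀ t ∈ Set.Icc a b, t ∉ Set.Icc (t0 - ε) (t0 + ε) → 0 < x t)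
    (z z' : ℝ → ℝ)
    (hz : ∀ t, z t = if t ∈ Set.Icc (t0 - ε) (t0 + ε) then δ else x t)
    (hz' : ∀ t, z' t = if t ∈ Set.Icc (t0 - ε) (t0 + ε) then 0 else x' t) :
    (∫⁻ t in Set.Icc a b,
        (ENNReal.ofReal ((m / 4) * (x' t) ^ 2)
          + ENNReal.ofReal (m ^ 2) / ENNReal.ofReal (x t)))
    > ∫⁻ t in Set.Icc a b,
        (ENNReal.ofReal ((m / 4) * (z' t) ^ 2)
          + ENNReal.ofReal (m ^ 2) / ENNReal.ofReal (z t)) :=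
  two_body_excision_strict_general a b δ t0 ε m hδ hm hε hsub x x' hrep hx'int hx'sq hx0 hle hbd1
    hbd2 hpos_out z z' hz hz'
end
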